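/- arXiv:1506.00697 — 4 statements merged into one kernel-verified Lean document; each statement's English description precedes it below -/
import Mathlib

section
/- Let $b>0$ and $\tau>0$. For each integer $n\ge 0$, the equation $\omega\cot(\omega\tau)=-b$ has exactly one solution $\omega_n(\tau)$ in the interval $\big((n+\tfrac12)\frac{\pi}{\tau},(n+1)\frac{\pi}{\tau}\big)$. -/
/-!
Substituting `x = ωτ` turns the equation into `x cot x = -bτ` on `((n + 1/2)π, (n + 1)π)`.
There `x cot x` is strictly decreasing, since its derivative is `(sin x cos x - x) / sin² x`
and `sin x cos x = sin (2x) / 2 < x` for `x > 0`; this gives uniqueness. For existence, the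
continuous function `x cos x + c sin x` takes the values `(-1)ⁿ c` and `(-1)ⁿ⁺¹ (n + 1)π` at the
endpoints, so it vanishes in between, and off the zeros of `sin` its zeros solve `x cot x = -c`.
-/

open Real Set

lemma sin_ne_zero_of_mem_Ioo_nat_mul_pi {n : ℕ} {x : ℝ} (hx : x ∈ Ioo (n * π) ((n + 1) * π)) :
    sin x ≠ 0 := by
  have hpos : 0 < sin (x - n * π) :=
    sin_pos_of_pos_of_lt_pi (by linarith [hx.1]) (by linarith [hx.2])
  have hshift := sin_add_nat_mul_pi (x - n * π) n
  rw [sub_add_cancel] at hshift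
  rw [hshift]
  exact mul_ne_zero (pow_ne_zero _ (by norm_num)) hpos.ne'

lemma hasDerivAt_mul_cos_div_sin {x : ℝ} (hx : sin x ≠ 0) :
    HasDerivAt (fun y => y * (cos y / sin y)) ((sin x * cos x - x) / sin x ^ 2) x := by
  refine ((hasDerivAt_id x).mul ((hasDerivAt_cos x).div (hasDerivAt_sin x) hx)).congr_deriv ?_
  simp only [Pi.div_apply, id]
  field_simp
  linear_combination (-x) * sin_sq_add_cos_sq x

lemma strictAntiOn_mul_cos_div_sin (n : ℕ) :
    StrictAntiOn (fun x => x * (cos x / sin x)) (Ioo (n * π) ((n + 1) * π)) := by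
  refine strictAntiOn_of_hasDerivWithinAt_neg (convex_Ioo _ _)
    (f' := fun x => (sin x * cos x - x) / sin x ^ 2)
    (fun x hx => (hasDerivAt_mul_cos_div_sin
      (sin_ne_zero_of_mem_Ioo_nat_mul_pi hx)).continuousAt.continuousWithinAt) ?_ ?_ <;>
    rw [interior_Ioo] <;> intro x hx
  · exact (hasDerivAt_mul_cos_div_sin (sin_ne_zero_of_mem_Ioo_nat_mul_pi hx)).hasDerivWithinAt
  · have hx0 : 0 < x := lt_of_le_of_lt (by positivity) hx.1
    have hsc : sin x * cos x < x := by
      have h2x := sin_lt (by positivity : 0 < 2 * x)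
      rw [sin_two_mul] at h2x
      linarith
    have hsin := sin_ne_zero_of_mem_Ioo_nat_mul_pi hx
    exact div_neg_of_neg_of_pos (by linarith) (by positivity)

lemma exists_mem_Ioo_mul_cos_add_mul_sin_eq_zero {c : ℝ} (hc : 0 < c) (n : ℕ) :
    ∃ x ∈ Ioo ((n + 1 / 2) * π) ((n + 1) * π), x * cos x + c * sin x = 0 := by
  set g : ℝ → ℝ := fun x => (-1) ^ n * (x * cos x + c * sin x)
  have hsign : ((-1 : ℝ) ^ n) ^ 2 = 1 := by rw [← pow_mul]; exact Even.neg_one_pow ⟨n, by ring⟩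
  have hleft : g ((n + 1 / 2) * π) = c := by
    simp only [g, show ((n : ℝ) + 1 / 2) * π = π / 2 + n * π by ring, cos_add_nat_mul_pi,
      sin_add_nat_mul_pi, cos_pi_div_two, sin_pi_div_two]
    linear_combination c * hsign
  have hright : g ((n + 1) * π) = -((n + 1) * π) := by
    simp only [g, show ((n : ℝ) + 1) * π = π + n * π by ring, cos_add_nat_mul_pi,
      sin_add_nat_mul_pi, cos_pi, sin_pi]
    linear_combination (-(π + n * π)) * hsign
  have hzero : (0 : ℝ) ∈ Ioo (g ((n + 1) * π)) (g ((n + 1 / 2) * π)) := by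
    rw [hleft, hright]
    exact ⟨by nlinarith [pi_pos], hc⟩
  obtain ⟨x, hx, hgx⟩ := intermediate_value_Ioo' (by nlinarith [pi_pos])
    (by fun_prop : Continuous g).continuousOn hzero
  exact ⟨x, hx, (mul_eq_zero.mp hgx).resolve_left (pow_ne_zero _ (by norm_num))⟩

theorem existsUnique_mul_cos_div_sin_eq_neg {c : ℝ} (hc : 0 < c) (n : ℕ) :
    ∃! x, x ∈ Ioo ((n + 1 / 2) * π) ((n + 1) * π) ∧ x * (cos x / sin x) = -c := by
  have hsub : Ioo (((n : ℝ) + 1 / 2) * π) ((n + 1) * π) ⊆ Ioo (n * π) ((n + 1) * π) :=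
    Ioo_subset_Ioo_left (by nlinarith [pi_pos])
  obtain ⟨x, hx, hroot⟩ := exists_mem_Ioo_mul_cos_add_mul_sin_eq_zero hc n
  have hsin := sin_ne_zero_of_mem_Ioo_nat_mul_pi (hsub hx)
  have hxc : x * (cos x / sin x) = -c := by
    field_simp
    linarith
  exact ⟨x, ⟨hx, hxc⟩, fun y ⟨hy, hyc⟩ =>
    (strictAntiOn_mul_cos_div_sin n).injOn (hsub hy) (hsub hx) (hyc.trans hxc.symm)⟩

/-- For `b, τ > 0` and every `n ∈ ℕ`, the equation `ω cot(ωτ) = -b` has exactly one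
solution in the interval `((n + 1/2)π/τ, (n+1)π/τ)`. -/
theorem exists_unique_omega (b τ : ℝ) (hb : 0 < b) (hτ : 0 < τ) (n : ℕ) :
    ∃! ω : ℝ, ω ∈ Set.Ioo (((n : ℝ) + 1 / 2) * π / τ) (((n : ℝ) + 1) * π / τ) ∧
      ω * (Real.cos (ω * τ) / Real.sin (ω * τ)) = -b := by
  refine ((Equiv.mulRight₀ τ hτ.ne').existsUnique_congr fun ω => ?_).mpr
    (existsUnique_mul_cos_div_sin_eq_neg (mul_pos hb hτ) n)
  simp only [Equiv.mulRight₀_apply, mem_Ioo, div_lt_iff₀ hτ, lt_div_iff₀ hτ]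
  refine and_congr_right fun _ => ?_
  rw [show ∀ q : ℝ, ω * τ * q = ω * q * τ from fun q => by ring, ← neg_mul,
    mul_left_inj' hτ.ne']
end

section
/- Let $b,\tau>0$, and for $n\ge 0$ let $\omega_n$ be the unique solution of $\omega\cot(\omega\tau)=-b$ in $\big((n+\tfrac12)\frac{\pi}{\tau},(n+1)\frac{\pi}{\tau}\big)$, $\lambda_n=\frac{1}{b^2+\omega_n^2}$, and $f_n(t)=\sqrt{\frac{2}{\tau+b\lambda_n}}\sin(\omega_n t)$. Let $K(s,t)=\frac{1}{2b}e^{-b|t-s|}-\frac{1}{2b}e^{-b(t+s)}$. Then for every $s\in[0,\tau]$, $\int_0^\tau K(s,t)f_n(t)\,dt=\lambda_n f_n(s)$, i.e. $f_n$ is an eigenfunction of the integral operator with kernel $K$ with eigenvalue $\lambda_n$, and $\int_0^\tau f_n(t)^2\,dt=1$. -/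
/-!
On `[0, τ]` the kernel is `K(s,t) = sinh(b·min(s,t)) e^{-b·max(s,t)} / b`, the Green's function of
`-u'' + b²u` with `u(0) = 0` and `u'(τ) + b u(τ) = 0`. Hence `∫ K(s,·) sin(ω·)` is the particular
solution `λ sin(ωs)` corrected by a multiple of `sinh(bs)` proportional to the boundary defect
`b sin(ωτ) + ω cos(ωτ)`, which the root condition `ω cot(ωτ) = -b` makes vanish. The same condition
gives `sin(ωτ) cos(ωτ) = -bωλ`, which turns `∫ sin²(ω·) = (τ - sin(ωτ) cos(ωτ)/ω)/2` into
`(τ + bλ)/2`.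
-/

open Real MeasureTheory Set

theorem hasDerivAt_exp_mul_mul_sin (a w t : ℝ) :
    HasDerivAt (fun x => exp (a * x) * (a * sin (w * x) - w * cos (w * x)))
      ((a ^ 2 + w ^ 2) * (exp (a * t) * sin (w * t))) t := by
  have he : HasDerivAt (fun x => exp (a * x)) (exp (a * t) * a) t := by
    simpa using ((hasDerivAt_id t).const_mul a).exp
  have hs : HasDerivAt (fun x => sin (w * x)) (cos (w * t) * w) t := by
    simpa using ((hasDerivAt_id t).const_mul w).sin
  have hc : HasDerivAt (fun x => cos (w * x)) (-sin (w * t) * w) t := by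
    simpa using ((hasDerivAt_id t).const_mul w).cos
  exact (he.mul ((hs.const_mul a).sub (hc.const_mul w))).congr_deriv
    (by simp only [Pi.sub_apply]; ring)

theorem integral_exp_mul_mul_sin {a w : ℝ} (h : a ^ 2 + w ^ 2 ≠ 0) (u v : ℝ) :
    ∫ t in u..v, exp (a * t) * sin (w * t) =
      (exp (a * v) * (a * sin (w * v) - w * cos (w * v))
        - exp (a * u) * (a * sin (w * u) - w * cos (w * u))) / (a ^ 2 + w ^ 2) := by
  rw [eq_div_iff h, mul_comm, ← intervalIntegral.integral_const_mul,
    intervalIntegral.integral_eq_sub_of_hasDerivAt (fun t _ => hasDerivAt_exp_mul_mul_sin a w t)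
      (by apply Continuous.intervalIntegrable; fun_prop)]

theorem integral_sin_mul_sq {w : ℝ} (hw : w ≠ 0) (τ : ℝ) :
    ∫ t in (0 : ℝ)..τ, sin (w * t) ^ 2 = (τ - sin (w * τ) * cos (w * τ) / w) / 2 := by
  rw [intervalIntegral.integral_comp_mul_left (fun x => sin x ^ 2) hw, integral_sin_sq]
  simp only [mul_zero, sin_zero, cos_zero, smul_eq_mul]
  field_simp
  ring

noncomputable def ouKernel (b s t : ℝ) : ℝ :=
  1 / (2 * b) * exp (-b * |t - s|) - 1 / (2 * b) * exp (-b * (t + s))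

theorem ouKernel_of_le {b s t : ℝ} (h : t ≤ s) :
    ouKernel b s t = exp (-(b * s)) / (2 * b) * (exp (b * t) - exp (-b * t)) := by
  rw [ouKernel, abs_of_nonpos (sub_nonpos.2 h), show -b * -(t - s) = -(b * s) + b * t by ring,
    show -b * (t + s) = -(b * s) + -b * t by ring, exp_add, exp_add]
  ring

theorem ouKernel_of_ge {b s t : ℝ} (h : s ≤ t) :
    ouKernel b s t = (exp (b * s) - exp (-(b * s))) / (2 * b) * exp (-b * t) := by
  rw [ouKernel, abs_of_nonneg (sub_nonneg.2 h), show -b * (t - s) = b * s + -b * t by ring,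
    show -b * (t + s) = -(b * s) + -b * t by ring, exp_add, exp_add]
  ring

theorem integral_ouKernel_mul_sin {b : ℝ} (hb : b ≠ 0) (w : ℝ) {τ s : ℝ}
    (hs : s ∈ Icc 0 τ) :
    ∫ t in (0 : ℝ)..τ, ouKernel b s t * sin (w * t) =
      (sin (w * s) - sinh (b * s) * exp (-b * τ) * (b * sin (w * τ) + w * cos (w * τ)) / b)
        / (b ^ 2 + w ^ 2) := by
  have hbw : b ^ 2 + w ^ 2 ≠ 0 :=
    (add_pos_of_pos_of_nonneg (sq_pos_of_ne_zero hb) (sq_nonneg w)).ne'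
  have hbw' : (-b) ^ 2 + w ^ 2 ≠ 0 := by rwa [neg_sq]
  have hint : ∀ u v, IntervalIntegrable (fun t => ouKernel b s t * sin (w * t)) volume u v := by
    intro u v
    apply Continuous.intervalIntegrable
    unfold ouKernel
    fun_prop
  have hleft : ∫ t in (0 : ℝ)..s, ouKernel b s t * sin (w * t) =
      exp (-(b * s)) / (2 * b) *
        ((∫ t in (0 : ℝ)..s, exp (b * t) * sin (w * t))
          - ∫ t in (0 : ℝ)..s, exp (-b * t) * sin (w * t)) := by
    rw [← intervalIntegral.integral_sub (by apply Continuous.intervalIntegrable; fun_prop)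
      (by apply Continuous.intervalIntegrable; fun_prop), ← intervalIntegral.integral_const_mul]
    refine intervalIntegral.integral_congr fun t ht => ?_
    rw [uIcc_of_le hs.1] at ht
    simp only [ouKernel_of_le ht.2]
    ring
  have hright : ∫ t in s..τ, ouKernel b s t * sin (w * t) =
      (exp (b * s) - exp (-(b * s))) / (2 * b) * ∫ t in s..τ, exp (-b * t) * sin (w * t) := by
    rw [← intervalIntegral.integral_const_mul]
    refine intervalIntegral.integral_congr fun t ht => ?_
    rw [uIcc_of_le hs.2] at ht
    simp only [ouKernel_of_ge ht.1]
    ring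
  rw [← intervalIntegral.integral_add_adjacent_intervals (hint 0 s) (hint s τ), hleft, hright,
    integral_exp_mul_mul_sin hbw, integral_exp_mul_mul_sin hbw', integral_exp_mul_mul_sin hbw',
    sinh_eq, neg_sq]
  simp only [mul_zero, sin_zero, cos_zero, exp_zero]
  rw [neg_mul b s, exp_neg (b * s)]
  field_simp
  ring

theorem ne_zero_and_mul_sin_add_mul_cos_eq_zero {b w x : ℝ} (hb : b ≠ 0)
    (h : w * (cos x / sin x) = -b) : w ≠ 0 ∧ b * sin x + w * cos x = 0 := by
  have hsin : sin x ≠ 0 := by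
    rintro hs
    rw [hs, div_zero, mul_zero, zero_eq_neg] at h
    exact hb h
  refine ⟨?_, ?_⟩
  · rintro rfl
    rw [zero_mul, zero_eq_neg] at h
    exact hb h
  · field_simp at h
    linarith

theorem sin_mul_cos_eq_of_mul_sin_add_mul_cos_eq_zero {b w x : ℝ} (hbw : b ^ 2 + w ^ 2 ≠ 0)
    (h : b * sin x + w * cos x = 0) : sin x * cos x = -(b * w) / (b ^ 2 + w ^ 2) := by
  rw [eq_div_iff hbw]
  linear_combination (b * cos x + w * sin x) * h - b * w * sin_sq_add_cos_sq x

theorem ou_KL_eigenfunction_general (b τ : ℝ) (hb : 0 < b) (hτ : 0 < τ) (ω : ℝ)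
    (hroot : ω * (Real.cos (ω * τ) / Real.sin (ω * τ)) = -b)
    (lam : ℝ) (hlam : lam = 1 / (b ^ 2 + ω ^ 2))
    (f : ℝ → ℝ) (hf : ∀ t, f t = Real.sqrt (2 / (τ + b * lam)) * Real.sin (ω * t))
    (K : ℝ → ℝ → ℝ)
    (hK : ∀ s t, K s t = 1 / (2 * b) * Real.exp (-b * |t - s|)
        - 1 / (2 * b) * Real.exp (-b * (t + s))) :
    (∀ s ∈ Set.Icc (0:ℝ) τ, (∫ t in (0:ℝ)..τ, K s t * f t) = lam * f s) ∧
    (∫ t in (0:ℝ)..τ, f t ^ 2) = 1 := by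
  obtain ⟨hω, hE⟩ := ne_zero_and_mul_sin_add_mul_cos_eq_zero hb.ne' hroot
  have hD : 0 < b ^ 2 + ω ^ 2 := by positivity
  have hnorm : 0 < τ + b * lam := by rw [hlam]; positivity
  obtain rfl : K = ouKernel b := funext₂ hK
  obtain rfl : f = fun t => sqrt (2 / (τ + b * lam)) * sin (ω * t) := funext hf
  refine ⟨fun s hs => ?_, ?_⟩
  · simp_rw [mul_left_comm _ (sqrt _), intervalIntegral.integral_const_mul,
      integral_ouKernel_mul_sin hb.ne' ω hs, hE, hlam]
    ring
  · simp_rw [mul_pow, intervalIntegral.integral_const_mul, integral_sin_mul_sq hω,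
      sin_mul_cos_eq_of_mul_sin_add_mul_cos_eq_zero hD.ne' hE,
      sq_sqrt (by positivity : 0 ≤ 2 / (τ + b * lam))]
    rw [hlam] at hnorm ⊢
    field_simp
    ring

/-- Karhunen–Loève eigenfunctions of the OU covariance kernel on `[0,τ]`: with `ω_n` the
unique root of `ω cot(ωτ) = -b` in `((n+1/2)π/τ, (n+1)π/τ)`, `λ_n = 1/(b² + ω_n²)` and
`f_n(t) = √(2/(τ + bλ_n)) sin(ω_n t)`, the function `f_n` is a normalized eigenfunction of
the integral operator with kernel `K(s,t) = (1/(2b))e^{-b|t-s|} - (1/(2b))e^{-b(t+s)}`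
with eigenvalue `λ_n`. -/
theorem ou_KL_eigenfunction (b τ : ℝ) (hb : 0 < b) (hτ : 0 < τ) (n : ℕ) (ω : ℝ)
    (hω : ω ∈ Set.Ioo (((n : ℝ) + 1 / 2) * π / τ) (((n : ℝ) + 1) * π / τ))
    (hroot : ω * (Real.cos (ω * τ) / Real.sin (ω * τ)) = -b)
    (lam : ℝ) (hlam : lam = 1 / (b ^ 2 + ω ^ 2))
    (f : ℝ → ℝ) (hf : ∀ t, f t = Real.sqrt (2 / (τ + b * lam)) * Real.sin (ω * t))
    (K : ℝ → ℝ → ℝ)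
    (hK : ∀ s t, K s t = 1 / (2 * b) * Real.exp (-b * |t - s|)
        - 1 / (2 * b) * Real.exp (-b * (t + s))) :
    (∀ s ∈ Set.Icc (0:ℝ) τ, (∫ t in (0:ℝ)..τ, K s t * f t) = lam * f s) ∧
    (∫ t in (0:ℝ)..τ, f t ^ 2) = 1 :=
  ou_KL_eigenfunction_general b τ hb hτ ω hroot lam hlam f hf K hK
end

section
/- Let $b,T>0$ and $\hat K(s,t)=K(s,t)-\frac{K(s,T)K(t,T)}{V(T)}$ be the covariance kernel of the Ornstein-Uhlenbeck bridge, where $K(s,t)=\frac{1}{2b}e^{-b|t-s|}-\frac{1}{2b}e^{-b(t+s)}$ and $V(T)=K(T,T)$. Then for every $n\ge 1$, the function $\hat f_n(t)=\sqrt{2/T}\sin(n\pi t/T)$ satisfies $\int_0^T \hat K(s,t)\hat f_n(t)\,dt=\hat\lambda_n \hat f_n(s)$ for all $s\in[0,T]$, with eigenvalue $\hat\lambda_n=\frac{T^2}{b^2T^2+n^2\pi^2}$. -/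
open Real MeasureTheory

/-!
For `0 ≤ s, t ≤ T` the bridge kernel is `K̂(s,t) = sinh(b min) sinh(b(T - max)) / (b sinh(bT))`,
the Green's function of `-d²/dt² + b²` with Dirichlet conditions at `0` and `T`. Splitting the
integral at `t = s`, each piece integrates `u · sin(ωt)` with `u'' = b²u`; since
`(u' v - u v')' = (b² + ω²) u v` for `v = sin(ωt)`, both pieces are boundary terms, the
boundary terms at `0` and `T` vanish because `sin(ωT) = 0`, and the addition formula for `sinh`
collapses the rest to `sin(ωs) / (b² + ω²)`.
-/

theorem sub_mul_integral_mul_eq_of_hasDerivAt {u u' v v' : ℝ → ℝ} {α β : ℝ}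
    (hu : ∀ t, HasDerivAt u (u' t) t) (hu' : ∀ t, HasDerivAt u' (α * u t) t)
    (hv : ∀ t, HasDerivAt v (v' t) t) (hv' : ∀ t, HasDerivAt v' (β * v t) t) (a c : ℝ) :
    (α - β) * ∫ t in a..c, u t * v t =
      (u' c * v c - u c * v' c) - (u' a * v a - u a * v' a) := by
  have hW : ∀ t, HasDerivAt (fun t => u' t * v t - u t * v' t) ((α - β) * (u t * v t)) t :=
    fun t => (((hu' t).mul (hv t)).sub ((hu t).mul (hv' t))).congr_deriv (by ring)
  have huv : Continuous fun t => u t * v t :=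
    (continuous_iff_continuousAt.2 fun t => (hu t).continuousAt).mul
      (continuous_iff_continuousAt.2 fun t => (hv t).continuousAt)
  rw [← intervalIntegral.integral_const_mul,
    intervalIntegral.integral_eq_sub_of_hasDerivAt (fun t _ => hW t)
      ((huv.const_mul _).intervalIntegrable a c)]

theorem hasDerivAt_sinh_mul (b t : ℝ) :
    HasDerivAt (fun t => sinh (b * t)) (b * cosh (b * t)) t :=
  (((hasDerivAt_id' t).const_mul b).sinh).congr_deriv (by ring)

theorem hasDerivAt_const_mul_cosh_mul (b t : ℝ) :
    HasDerivAt (fun t => b * cosh (b * t)) (b ^ 2 * sinh (b * t)) t :=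
  ((((hasDerivAt_id' t).const_mul b).cosh).const_mul b).congr_deriv (by ring)

theorem hasDerivAt_sinh_mul_sub (b T t : ℝ) :
    HasDerivAt (fun t => sinh (b * (T - t))) (-b * cosh (b * (T - t))) t :=
  (((hasDerivAt_id' t).const_sub T).const_mul b).sinh.congr_deriv (by ring)

theorem hasDerivAt_const_mul_cosh_mul_sub (b T t : ℝ) :
    HasDerivAt (fun t => -b * cosh (b * (T - t))) (b ^ 2 * sinh (b * (T - t))) t :=
  ((((hasDerivAt_id' t).const_sub T).const_mul b).cosh.const_mul (-b)).congr_deriv (by ring)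

theorem hasDerivAt_sin_mul (ω t : ℝ) :
    HasDerivAt (fun t => sin (ω * t)) (ω * cos (ω * t)) t :=
  (((hasDerivAt_id' t).const_mul ω).sin).congr_deriv (by ring)

theorem hasDerivAt_const_mul_cos_mul (ω t : ℝ) :
    HasDerivAt (fun t => ω * cos (ω * t)) (-ω ^ 2 * sin (ω * t)) t :=
  ((((hasDerivAt_id' t).const_mul ω).cos).const_mul ω).congr_deriv (by ring)

theorem exp_neg_mul_sinh_sub_exp_neg_mul_sinh (x y : ℝ) :
    exp (-x) * sinh y - exp (-y) * sinh x = sinh (y - x) := by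
  rw [← cosh_sub_sinh, ← cosh_sub_sinh, sinh_sub]
  ring

noncomputable def ouCov (b s t : ℝ) : ℝ :=
  1 / (2 * b) * Real.exp (-b * |t - s|) - 1 / (2 * b) * Real.exp (-b * (t + s))

noncomputable def ouBridgeCov (b T s t : ℝ) : ℝ :=
  ouCov b s t - ouCov b s T * ouCov b t T / ouCov b T T

theorem ouCov_comm (b s t : ℝ) : ouCov b s t = ouCov b t s := by
  rw [ouCov, ouCov, abs_sub_comm, add_comm]

theorem ouCov_of_le {b s t : ℝ} (hts : t ≤ s) :
    ouCov b s t = exp (-(b * s)) * sinh (b * t) / b := by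
  rw [ouCov, abs_of_nonpos (sub_nonpos.2 hts), show -b * -(t - s) = -(b * s) + b * t by ring,
    show -b * (t + s) = -(b * s) + -(b * t) by ring, exp_add, exp_add, sinh_eq]
  ring

theorem ouBridgeCov_comm (b T s t : ℝ) : ouBridgeCov b T s t = ouBridgeCov b T t s := by
  rw [ouBridgeCov, ouBridgeCov, ouCov_comm b s t, mul_comm (ouCov b s T)]

theorem ouBridgeCov_of_le {b T s t : ℝ} (hb : b ≠ 0) (hT : T ≠ 0) (hts : t ≤ s) (hsT : s ≤ T) :
    ouBridgeCov b T s t = sinh (b * t) * sinh (b * (T - s)) / (b * sinh (b * T)) := by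
  have hbT : sinh (b * T) ≠ 0 := sinh_ne_zero.2 (mul_ne_zero hb hT)
  have hdiff := exp_neg_mul_sinh_sub_exp_neg_mul_sinh (b * s) (b * T)
  rw [← mul_sub] at hdiff
  rw [ouBridgeCov, ouCov_comm b s T, ouCov_comm b t T, ouCov_of_le hts, ouCov_of_le hsT,
    ouCov_of_le (hts.trans hsT), ouCov_of_le le_rfl, ← hdiff]
  field_simp

theorem integral_ouBridgeCov_mul_sin {b T ω s : ℝ} (hb : b ≠ 0) (hT : T ≠ 0)
    (hω : sin (ω * T) = 0) (hs0 : 0 ≤ s) (hsT : s ≤ T) :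
    ∫ t in (0 : ℝ)..T, ouBridgeCov b T s t * sin (ω * t) = sin (ω * s) / (b ^ 2 + ω ^ 2) := by
  have hbT : sinh (b * T) ≠ 0 := sinh_ne_zero.2 (mul_ne_zero hb hT)
  have hcont : Continuous fun t => ouBridgeCov b T s t * sin (ω * t) := by
    unfold ouBridgeCov ouCov; fun_prop
  have hleft : ∫ t in (0 : ℝ)..s, ouBridgeCov b T s t * sin (ω * t) =
      sinh (b * (T - s)) / (b * sinh (b * T)) * ∫ t in (0 : ℝ)..s, sinh (b * t) * sin (ω * t) := by
    rw [← intervalIntegral.integral_const_mul]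
    refine intervalIntegral.integral_congr fun t ht => ?_
    rw [Set.uIcc_of_le hs0] at ht
    simp only [ouBridgeCov_of_le hb hT ht.2 hsT]
    ring
  have hright : ∫ t in s..T, ouBridgeCov b T s t * sin (ω * t) =
      sinh (b * s) / (b * sinh (b * T)) * ∫ t in s..T, sinh (b * (T - t)) * sin (ω * t) := by
    rw [← intervalIntegral.integral_const_mul]
    refine intervalIntegral.integral_congr fun t ht => ?_
    rw [Set.uIcc_of_le hsT] at ht
    simp only [ouBridgeCov_comm b T s, ouBridgeCov_of_le hb hT ht.1 ht.2]
    ring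
  have wleft := sub_mul_integral_mul_eq_of_hasDerivAt (hasDerivAt_sinh_mul b)
    (hasDerivAt_const_mul_cosh_mul b) (hasDerivAt_sin_mul ω) (hasDerivAt_const_mul_cos_mul ω) 0 s
  have wright := sub_mul_integral_mul_eq_of_hasDerivAt (hasDerivAt_sinh_mul_sub b T)
    (hasDerivAt_const_mul_cosh_mul_sub b T) (hasDerivAt_sin_mul ω)
    (hasDerivAt_const_mul_cos_mul ω) s T
  have hsplit :
      sinh (b * T) = sinh (b * s) * cosh (b * (T - s)) + cosh (b * s) * sinh (b * (T - s)) := by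
    rw [← sinh_add]; ring_nf
  simp only [mul_zero, sinh_zero, sin_zero, sub_self, hω] at wleft wright
  rw [← intervalIntegral.integral_add_adjacent_intervals (hcont.intervalIntegrable 0 s)
    (hcont.intervalIntegrable s T), hleft, hright]
  generalize ∫ t in (0 : ℝ)..s, sinh (b * t) * sin (ω * t) = I₁ at wleft ⊢
  generalize ∫ t in s..T, sinh (b * (T - t)) * sin (ω * t) = I₂ at wright ⊢
  have hden : b ^ 2 + ω ^ 2 ≠ 0 := by positivity
  rw [div_mul_eq_mul_div, div_mul_eq_mul_div, ← add_div,
    div_eq_div_iff (mul_ne_zero hb hbT) hden]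
  linear_combination sinh (b * (T - s)) * wleft + sinh (b * s) * wright - b * sin (ω * s) * hsplit

theorem ou_bridge_KL_eigenfunction_general (b T : ℝ) (hb : 0 < b) (hT : 0 < T)
    (K : ℝ → ℝ → ℝ)
    (hK : ∀ s t, K s t = 1 / (2 * b) * Real.exp (-b * |t - s|)
        - 1 / (2 * b) * Real.exp (-b * (t + s)))
    (V : ℝ → ℝ) (hV : ∀ s, V s = K s s)
    (Khat : ℝ → ℝ → ℝ)
    (hKhat : ∀ s t, Khat s t = K s t - K s T * K t T / V T)
    (n : ℕ)
    (fhat : ℝ → ℝ)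
    (hfhat : ∀ t, fhat t = Real.sqrt (2 / T) * Real.sin ((n : ℝ) * π * t / T)) :
    ∀ s ∈ Set.Icc (0:ℝ) T,
      (∫ t in (0:ℝ)..T, Khat s t * fhat t) =
        T ^ 2 / (b ^ 2 * T ^ 2 + (n : ℝ) ^ 2 * π ^ 2) * fhat s := by
  rintro s ⟨hs0, hsT⟩
  obtain rfl : K = ouCov b := funext₂ hK
  have hKhat' : ∀ t, Khat s t = ouBridgeCov b T s t := fun t => by rw [hKhat, hV]; rfl
  have hsin : sin (n * π / T * T) = 0 := by
    rw [div_mul_cancel₀ _ hT.ne']; exact sin_nat_mul_pi n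
  have hfhat' : ∀ t, fhat t = √(2 / T) * sin (n * π / T * t) := fun t => by
    rw [hfhat, mul_div_right_comm]
  simp only [hKhat', hfhat', mul_left_comm _ √(2 / T), intervalIntegral.integral_const_mul,
    integral_ouBridgeCov_mul_sin hb.ne' hT.ne' hsin hs0 hsT]
  field_simp

/-- Karhunen–Loève eigenfunctions of the OU-bridge covariance kernel on `[0,T]`: for each
`n ≥ 1`, `f̂_n(t) = √(2/T) sin(nπt/T)` is an eigenfunction of the integral operator with
kernel `K̂(s,t) = K(s,t) - K(s,T)K(t,T)/V(T)`, with eigenvalue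
`λ̂_n = T²/(b²T² + n²π²)`. -/
theorem ou_bridge_KL_eigenfunction (b T : ℝ) (hb : 0 < b) (hT : 0 < T)
    (K : ℝ → ℝ → ℝ)
    (hK : ∀ s t, K s t = 1 / (2 * b) * Real.exp (-b * |t - s|)
        - 1 / (2 * b) * Real.exp (-b * (t + s)))
    (V : ℝ → ℝ) (hV : ∀ s, V s = K s s)
    (Khat : ℝ → ℝ → ℝ)
    (hKhat : ∀ s t, Khat s t = K s t - K s T * K t T / V T)
    (n : ℕ) (hn : 1 ≤ n)
    (fhat : ℝ → ℝ)
    (hfhat : ∀ t, fhat t = Real.sqrt (2 / T) * Real.sin ((n : ℝ) * π * t / T)) :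
    ∀ s ∈ Set.Icc (0:ℝ) T,
      (∫ t in (0:ℝ)..T, Khat s t * fhat t) =
        T ^ 2 / (b ^ 2 * T ^ 2 + (n : ℝ) ^ 2 * π ^ 2) * fhat s :=
  ou_bridge_KL_eigenfunction_general b T hb hT K hK V hV Khat hKhat n fhat hfhat
end

section
/- Let $K(s,t)=\frac{1}{2b}e^{-b|t-s|}-\frac{1}{2b}e^{-b(t+s)}$ with $b>0$, and let $f:[0,T]\to\mathbb{R}$ be continuous. Then $g(s)=\int_0^T K(s,t)f(t)\,dt$ is twice differentiable on $(0,T)$ and satisfies the ODE $g''(s)=-f(s)+b^2 g(s)$. -/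
open Real MeasureTheory Set

/-- For the OU covariance kernel `K(s,t) = (1/(2b))e^{-b|t-s|} - (1/(2b))e^{-b(t+s)}` with
`b > 0` and continuous `f : [0,T] → ℝ`, the function `g(s) = ∫_0^T K(s,t) f(t) dt` is
twice differentiable on `(0,T)` and satisfies `g''(s) = -f(s) + b² g(s)`. -/
theorem ou_kernel_ode (b T : ℝ) (hb : 0 < b) (hT : 0 < T)
    (K : ℝ → ℝ → ℝ)
    (hK : ∀ s t, K s t = 1 / (2 * b) * Real.exp (-b * |t - s|)
        - 1 / (2 * b) * Real.exp (-b * (t + s)))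
    (f : ℝ → ℝ) (hf : ContinuousOn f (Icc 0 T))
    (g : ℝ → ℝ) (hg : ∀ s, g s = ∫ t in (0:ℝ)..T, K s t * f t) :
    ∀ s ∈ Ioo (0:ℝ) T,
      (HasDerivAt g (deriv g s) s) ∧
      HasDerivAt (deriv g) (-f s + b ^ 2 * g s) s := by
  have hb' : b ≠ 0 := hb.ne'
  -- clamp f to a globally continuous φ
  set φ : ℝ → ℝ := fun t => f (min (max t 0) T) with hφdef
  have hmem : ∀ t : ℝ, min (max t 0) T ∈ Icc 0 T := fun t =>
    ⟨le_min (le_max_right _ _) hT.le, min_le_right _ _⟩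
  have hφ : Continuous φ :=
    hf.comp_continuous ((continuous_id.max continuous_const).min continuous_const) hmem
  have hφeq : ∀ t ∈ Icc (0:ℝ) T, φ t = f t := by
    intro t ht
    simp only [hφdef, max_eq_left ht.1, min_eq_left ht.2]
  set A : ℝ → ℝ := fun s => ∫ t in (0:ℝ)..s, Real.sinh (b*t) * φ t with hA
  set B : ℝ → ℝ := fun s => ∫ t in s..T, Real.exp (-b*t) * φ t with hB
  set G : ℝ → ℝ := fun s => (1/b) * (Real.exp (-b*s) * A s + Real.sinh (b*s) * B s) with hGdef
  have hc1 : Continuous fun t => Real.sinh (b*t) * φ t :=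
    (Real.continuous_sinh.comp (continuous_const.mul continuous_id)).mul hφ
  have hc2 : Continuous fun t => Real.exp (-b*t) * φ t :=
    (Real.continuous_exp.comp (continuous_const.mul continuous_id)).mul hφ
  -- key algebraic identities
  have key1 : ∀ s t : ℝ, 1/(2*b) * Real.exp (-b*(s-t)) - 1/(2*b) * Real.exp (-b*(t+s))
      = 1/b * (Real.exp (-b*s) * Real.sinh (b*t)) := by
    intro s t
    rw [Real.sinh_eq, show -b*(s-t) = -(b*s) + b*t by ring,
      show -b*(t+s) = -(b*s) + -(b*t) by ring, Real.exp_add, Real.exp_add]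
    field_simp
  have key2 : ∀ s t : ℝ, 1/(2*b) * Real.exp (-b*(t-s)) - 1/(2*b) * Real.exp (-b*(t+s))
      = 1/b * (Real.sinh (b*s) * Real.exp (-b*t)) := by
    intro s t
    rw [Real.sinh_eq, show -b*(t-s) = b*s + -(b*t) by ring,
      show -b*(t+s) = -(b*s) + -(b*t) by ring, Real.exp_add, Real.exp_add]
    field_simp
  -- g = G on Ioo 0 T
  have hgG : ∀ s ∈ Ioo (0:ℝ) T, g s = G s := by
    intro s hs
    have hKc : Continuous fun t => K s t * φ t := by
      have : (fun t => K s t * φ t) = fun t =>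
          (1 / (2*b) * Real.exp (-b * |t - s|) - 1 / (2*b) * Real.exp (-b * (t + s))) * φ t :=
        funext fun t => by rw [hK]
      rw [this]
      apply Continuous.mul _ hφ
      apply Continuous.sub
      · exact continuous_const.mul (Real.continuous_exp.comp
          (continuous_const.mul (continuous_id.sub continuous_const).abs))
      · exact continuous_const.mul (Real.continuous_exp.comp
          (continuous_const.mul (continuous_id.add continuous_const)))
    rw [hg]
    have h1 : (∫ t in (0:ℝ)..T, K s t * f t) = ∫ t in (0:ℝ)..T, K s t * φ t := by
      apply intervalIntegral.integral_congr
      intro t ht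
      rw [uIcc_of_le hT.le] at ht
      show K s t * f t = K s t * φ t
      rw [hφeq t ht]
    rw [h1, ← intervalIntegral.integral_add_adjacent_intervals
      (hKc.intervalIntegrable 0 s) (hKc.intervalIntegrable s T)]
    have e1 : (∫ t in (0:ℝ)..s, K s t * φ t)
        = ∫ t in (0:ℝ)..s, (1/b * Real.exp (-b*s)) * (Real.sinh (b*t) * φ t) := by
      apply intervalIntegral.integral_congr
      intro t ht
      rw [uIcc_of_le hs.1.le] at ht
      show K s t * φ t = (1/b * Real.exp (-b*s)) * (Real.sinh (b*t) * φ t)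
      rw [hK, abs_of_nonpos (by linarith [ht.2] : t - s ≤ 0), show -(t-s) = s - t by ring]
      rw [show (1:ℝ)/b * Real.exp (-b*s) * (Real.sinh (b*t) * φ t)
          = (1/b * (Real.exp (-b*s) * Real.sinh (b*t))) * φ t by ring, ← key1 s t]
    have e2 : (∫ t in s..T, K s t * φ t)
        = ∫ t in s..T, (1/b * Real.sinh (b*s)) * (Real.exp (-b*t) * φ t) := by
      apply intervalIntegral.integral_congr
      intro t ht
      rw [uIcc_of_le hs.2.le] at ht
      show K s t * φ t = (1/b * Real.sinh (b*s)) * (Real.exp (-b*t) * φ t)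
      rw [hK, abs_of_nonneg (by linarith [ht.1] : 0 ≤ t - s)]
      rw [show (1:ℝ)/b * Real.sinh (b*s) * (Real.exp (-b*t) * φ t)
          = (1/b * (Real.sinh (b*s) * Real.exp (-b*t))) * φ t by ring, ← key2 s t]
    rw [e1, e2, intervalIntegral.integral_const_mul, intervalIntegral.integral_const_mul]
    simp only [hGdef, hA, hB]
    ring
  -- FTC derivatives of A and B
  have hA' : ∀ s : ℝ, HasDerivAt A (Real.sinh (b*s) * φ s) s := fun s =>
    intervalIntegral.integral_hasDerivAt_right (hc1.intervalIntegrable 0 s)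
      (hc1.stronglyMeasurable.stronglyMeasurableAtFilter) hc1.continuousAt
  have hB' : ∀ s : ℝ, HasDerivAt B (-(Real.exp (-b*s) * φ s)) s := by
    intro s
    have h0 : HasDerivAt (fun u => ∫ t in T..u, Real.exp (-b*t) * φ t)
        (Real.exp (-b*s) * φ s) s :=
      intervalIntegral.integral_hasDerivAt_right (hc2.intervalIntegrable T s)
        (hc2.stronglyMeasurable.stronglyMeasurableAtFilter) hc2.continuousAt
    have hBeq : B = fun u => -∫ t in T..u, Real.exp (-b*t) * φ t := by
      funext u
      simp only [hB]
      exact intervalIntegral.integral_symm T u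
    rw [hBeq]
    exact h0.neg
  -- elementary derivatives
  have hexp : ∀ s : ℝ, HasDerivAt (fun u : ℝ => Real.exp (-b*u)) (Real.exp (-b*s) * (-b*1)) s :=
    fun s => HasDerivAt.exp ((hasDerivAt_id s).const_mul (-b))
  have hsinh : ∀ s : ℝ, HasDerivAt (fun u : ℝ => Real.sinh (b*u)) (Real.cosh (b*s) * (b*1)) s :=
    fun s => HasDerivAt.sinh ((hasDerivAt_id s).const_mul b)
  have hcosh : ∀ s : ℝ, HasDerivAt (fun u : ℝ => Real.cosh (b*u)) (Real.sinh (b*s) * (b*1)) s :=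
    fun s => HasDerivAt.cosh ((hasDerivAt_id s).const_mul b)
  set g1 : ℝ → ℝ := fun s => -Real.exp (-b*s) * A s + Real.cosh (b*s) * B s with hg1def
  have hG' : ∀ s : ℝ, HasDerivAt G (g1 s) s := by
    intro s
    have h := (((hexp s).mul (hA' s)).add ((hsinh s).mul (hB' s))).const_mul (1/b)
    have h2 : HasDerivAt G (1/b * (Real.exp (-b*s) * (-b*1) * A s
        + Real.exp (-b*s) * (Real.sinh (b*s) * φ s)
        + (Real.cosh (b*s) * (b*1) * B s + Real.sinh (b*s) * -(Real.exp (-b*s) * φ s)))) s := by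
      rw [hGdef]; exact h
    convert h2 using 1
    simp only [hg1def]
    field_simp
    ring
  have hg1' : ∀ s : ℝ, HasDerivAt g1 (b^2 * G s - φ s) s := by
    intro s
    have h := ((((hexp s).neg).mul (hA' s)).add ((hcosh s).mul (hB' s)))
    have h2 : HasDerivAt g1 (-(Real.exp (-b*s) * (-b*1)) * A s
        + -Real.exp (-b*s) * (Real.sinh (b*s) * φ s)
        + (Real.sinh (b*s) * (b*1) * B s + Real.cosh (b*s) * -(Real.exp (-b*s) * φ s))) s := by
      rw [hg1def]; exact h
    convert h2 using 1
    have e1 : Real.sinh (b*s) + Real.cosh (b*s) = Real.exp (b*s) := Real.sinh_add_cosh _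
    have e2 : Real.exp (-b*s) * Real.exp (b*s) = 1 := by
      rw [← Real.exp_add]; norm_num
    have e3 : b^2 * G s = b * (Real.exp (-b*s) * A s + Real.sinh (b*s) * B s) := by
      rw [hGdef]; field_simp
    linear_combination e3 + (φ s * Real.exp (-b*s)) * e1 + (φ s) * e2
  have hgder : ∀ s ∈ Ioo (0:ℝ) T, HasDerivAt g (g1 s) s := fun s hs =>
    (hG' s).congr_of_eventuallyEq
      (Filter.eventuallyEq_of_mem (isOpen_Ioo.mem_nhds hs) hgG)
  have hderiv_eq : ∀ s ∈ Ioo (0:ℝ) T, deriv g s = g1 s := fun s hs => (hgder s hs).deriv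
  intro s hs
  refine ⟨?_, ?_⟩
  · rw [hderiv_eq s hs]
    exact hgder s hs
  · have hev : deriv g =ᶠ[nhds s] g1 :=
      Filter.eventuallyEq_of_mem (isOpen_Ioo.mem_nhds hs) hderiv_eq
    have h := (hg1' s).congr_of_eventuallyEq hev
    have hval : b^2 * G s - φ s = -f s + b^2 * g s := by
      rw [hgG s hs, hφeq s ⟨hs.1.le, hs.2.le⟩]; ring
    rwa [hval] at h
end
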